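/- arXiv:1908.10723 — 6 statements merged into one kernel-verified Lean document; each statement's English description precedes it below -/
import Mathlib

section
/- There exists an absolute constant C > 0 such that the following holds. Let E ⊆ ℂ be any set, let p be a prime, let d ≥ 2, and let F : ℕ × ℝ → ℝ be such that every function h : ℤ/pℤ → E ∪ {0} satisfies ‖ĥ‖₁ ≥ F(p, |supp h| · p^{-1}). Then for every function f : (ℤ/pℤ)^d → E ∪ {0} with |supp f| = δp^d and δ ≥ C p^{-1}, there exists δ' with δ'p an integer and |δ' − δ| ≤ C δ^{1/2} p^{-1/2} such that ‖f̂‖₁ ≥ F(p, δ'). -/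
open scoped BigOperators

/-- Fourier transform of `f : ZMod p → ℂ`. -/
noncomputable def ft1 {p : ℕ} [NeZero p] (f : ZMod p → ℂ) (ξ : ZMod p) : ℂ :=
  (p : ℂ)⁻¹ * ∑ x : ZMod p,
    f x * Complex.exp (-(2 * Real.pi * Complex.I) * ((ξ * x).val : ℂ) / p)

/-- Wiener norm of `f : ZMod p → ℂ`. -/
noncomputable def wiener1 {p : ℕ} [NeZero p] (f : ZMod p → ℂ) : ℝ :=
  ∑ ξ : ZMod p, ‖ft1 f ξ‖

/-- Fourier transform of `f : (ZMod p)^d → ℂ`. -/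
noncomputable def ftd {p d : ℕ} [NeZero p] (f : (Fin d → ZMod p) → ℂ) (ξ : Fin d → ZMod p) : ℂ :=
  ((p : ℂ) ^ d)⁻¹ * ∑ x : Fin d → ZMod p,
    f x * Complex.exp (-(2 * Real.pi * Complex.I) * (((∑ i, ξ i * x i : ZMod p)).val : ℂ) / p)

/-- Wiener norm of `f : (ZMod p)^d → ℂ`. -/
noncomputable def wienerd {p d : ℕ} [NeZero p] (f : (Fin d → ZMod p) → ℂ) : ℝ :=
  ∑ ξ : Fin d → ZMod p, ‖ftd f ξ‖

open Finset Matrix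

/-!
Restricting `f` to an affine line `t ↦ a + t • v` cannot increase the Wiener norm: by Fourier
inversion, the `ξ`-th coefficient of the restriction is the sum of the coefficients `f̂ η` over the
hyperplane `η ⬝ᵥ v = ξ`, twisted by unimodular phases. So it suffices to find a line meeting
`supp f` in `n` points with `|n - δ p| ≤ √(δ p)`, and to take `δ' = n / p` (the theorem holds
with `C = 1`). Normalise lines by `v i₀ = 1` and `a i₀ = 0`. The lines of a fixed direction
partition the space, so the counts `n` average to `δ p`; two distinct points lie on at most one
normalised line, so the second moment of `n` exceeds the square of the mean by at most the mean.
Hence some line has `(n - δ p)² ≤ δ p`.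
-/

lemma AddChar.map_sum_eq_prod {A M ι : Type*} [AddCommMonoid A] [CommMonoid M]
    (φ : AddChar A M) (s : Finset ι) (g : ι → A) : φ (∑ i ∈ s, g i) = ∏ i ∈ s, φ (g i) := by
  classical
  induction s using Finset.induction_on with
  | empty => simp
  | insert i s hi ih => rw [sum_insert hi, prod_insert hi, φ.map_add_eq_mul, ih]

section Fourier

variable {p : ℕ} [NeZero p]

local notation "ψ" => (ZMod.stdAddChar : AddChar (ZMod p) ℂ)

lemma exp_val_eq_stdAddChar_neg (u : ZMod p) :
    Complex.exp (-(2 * Real.pi * Complex.I) * (u.val : ℂ) / p) = ψ (-u) := by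
  have : -u = ((-(u.val : ℤ) : ℤ) : ZMod p) := by simp
  rw [this, ZMod.stdAddChar_coe]
  congr 1
  push_cast
  ring

lemma ft1_eq_sum_stdAddChar (f : ZMod p → ℂ) (ξ : ZMod p) :
    ft1 f ξ = (p : ℂ)⁻¹ * ∑ x, f x * ψ (-(ξ * x)) := by
  simp only [ft1, exp_val_eq_stdAddChar_neg]

lemma ftd_eq_sum_stdAddChar {d : ℕ} (f : (Fin d → ZMod p) → ℂ) (ξ : Fin d → ZMod p) :
    ftd f ξ = ((p : ℂ) ^ d)⁻¹ * ∑ x, f x * ψ (-(ξ ⬝ᵥ x)) := by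
  simp only [ftd, exp_val_eq_stdAddChar_neg, dotProduct]

lemma sum_stdAddChar_mul (u : ZMod p) :
    ∑ t, ψ (t * u) = if u = 0 then (p : ℂ) else 0 := by
  simpa using AddChar.sum_mulShift u (ZMod.isPrimitive_stdAddChar p)

lemma sum_stdAddChar_dotProduct {d : ℕ} (z : Fin d → ZMod p) :
    ∑ η : Fin d → ZMod p, ψ (η ⬝ᵥ z) = if z = 0 then (p : ℂ) ^ d else 0 := by
  have : ∑ η : Fin d → ZMod p, ψ (η ⬝ᵥ z) = ∏ i, ∑ t, ψ (t * z i) := by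
    rw [prod_univ_sum]
    simp [dotProduct, AddChar.map_sum_eq_prod, Fintype.piFinset_univ]
  simp_rw [this, sum_stdAddChar_mul, prod_ite_zero, funext_iff]
  simp

theorem sum_ftd_mul_stdAddChar {d : ℕ} (f : (Fin d → ZMod p) → ℂ) (x : Fin d → ZMod p) :
    ∑ η, ftd f η * ψ (η ⬝ᵥ x) = f x := by
  have hp : (p : ℂ) ^ d ≠ 0 := pow_ne_zero _ (NeZero.ne _)
  calc ∑ η, ftd f η * ψ (η ⬝ᵥ x)
      = ((p : ℂ) ^ d)⁻¹ * ∑ y, f y * ∑ η, ψ (η ⬝ᵥ (x - y)) := by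
        simp_rw [ftd_eq_sum_stdAddChar, mul_sum, sum_mul]
        rw [sum_comm]
        refine sum_congr rfl fun y _ => sum_congr rfl fun η _ => ?_
        rw [dotProduct_sub, sub_eq_neg_add, AddChar.map_add_eq_mul]
        ring
    _ = f x := by
        simp_rw [sum_stdAddChar_dotProduct, sub_eq_zero, mul_ite, mul_zero, sum_ite_eq,
          if_pos (mem_univ x)]
        field_simp

lemma ft1_comp_line {d : ℕ} (f : (Fin d → ZMod p) → ℂ) (v a : Fin d → ZMod p) (ξ : ZMod p) :
    ft1 (fun t : ZMod p => f (a + t • v)) ξ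
      = ∑ η with η ⬝ᵥ v = ξ, ftd f η * ψ (η ⬝ᵥ a) := by
  have hp : (p : ℂ) ≠ 0 := NeZero.ne _
  calc ft1 (fun t : ZMod p => f (a + t • v)) ξ
      = ∑ η, ftd f η * ψ (η ⬝ᵥ a) * ((p : ℂ)⁻¹ * ∑ t, ψ (t * (η ⬝ᵥ v - ξ))) := by
        simp_rw [ft1_eq_sum_stdAddChar, ← sum_ftd_mul_stdAddChar f (a + (_ : ZMod p) • v),
          sum_mul, mul_sum]
        rw [sum_comm]
        refine sum_congr rfl fun η _ => sum_congr rfl fun t _ => ?_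
        rw [dotProduct_add, dotProduct_smul, smul_eq_mul, AddChar.map_add_eq_mul,
          mul_sub, sub_eq_add_neg, AddChar.map_add_eq_mul, mul_comm t ξ, mul_comm t]
        ring
    _ = ∑ η with η ⬝ᵥ v = ξ, ftd f η * ψ (η ⬝ᵥ a) := by
        simp_rw [sum_stdAddChar_mul, sub_eq_zero, sum_filter, mul_ite, mul_zero,
          inv_mul_cancel₀ hp, mul_one]

lemma wiener1_comp_line_le {d : ℕ} (f : (Fin d → ZMod p) → ℂ) (v a : Fin d → ZMod p) :
    wiener1 (fun t : ZMod p => f (a + t • v)) ≤ wienerd f := by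
  calc wiener1 (fun t : ZMod p => f (a + t • v))
      ≤ ∑ ξ, ∑ η with η ⬝ᵥ v = ξ, ‖ftd f η‖ := by
        refine sum_le_sum fun ξ _ => ?_
        rw [ft1_comp_line]
        refine (norm_sum_le _ _).trans_eq (sum_congr rfl fun η _ => ?_)
        rw [norm_mul, ZMod.stdAddChar_apply, Circle.norm_coe, mul_one]
    _ = wienerd f := sum_fiberwise _ _ _

end Fourier

lemma exists_sq_sub_le_of_sum_sq_le {α : Type*} {s : Finset α} (hs : s.Nonempty) (x : α → ℝ)
    {μ c : ℝ} (hsum : ∑ i ∈ s, x i = #s * μ) (hsq : ∑ i ∈ s, x i ^ 2 ≤ #s * (μ ^ 2 + c)) :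
    ∃ i ∈ s, (x i - μ) ^ 2 ≤ c := by
  refine exists_le_of_sum_le hs ?_
  have : ∑ i ∈ s, (x i - μ) ^ 2 = ∑ i ∈ s, x i ^ 2 - 2 * μ * ∑ i ∈ s, x i + #s * μ ^ 2 := by
    simp_rw [sub_sq, sum_add_distrib, sum_sub_distrib, ← sum_mul, ← mul_sum, sum_const,
      nsmul_eq_mul]
    ring
  rw [this, hsum, sum_const, nsmul_eq_mul]
  nlinarith

lemma abs_div_sub_le_of_sq_sub_le {n δ p : ℝ} (hp : 0 < p) (hδ : 0 ≤ δ)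
    (h : (n - δ * p) ^ 2 ≤ δ * p) :
    |n / p - δ| ≤ δ ^ ((1 : ℝ) / 2) * p ^ (-(1 : ℝ) / 2) := by
  have hsqrt : |n - δ * p| ≤ √(δ * p) := Real.abs_le_sqrt h
  rw [neg_div, Real.rpow_neg hp.le, ← Real.sqrt_eq_rpow, ← Real.sqrt_eq_rpow]
  calc |n / p - δ| = |n - δ * p| / p := by
        rw [← abs_of_pos hp, ← abs_div, abs_of_pos hp, sub_div, mul_div_cancel_right₀ _ hp.ne']
    _ ≤ √(δ * p) / p := by gcongr
    _ = √δ * (√p)⁻¹ := by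
        rw [Real.sqrt_mul hδ, ← Real.sq_sqrt hp.le]
        field_simp
        rw [Real.sqrt_sq (Real.sqrt_nonneg _)]

section Lines

variable {ι F : Type*} [Fintype ι] [DecidableEq ι] [Fintype F] [DecidableEq F]

def coordHyperplane (i₀ : ι) (c : F) : Finset (ι → F) := {x | x i₀ = c}

@[simp]
lemma mem_coordHyperplane {i₀ : ι} {c : F} {x : ι → F} :
    x ∈ coordHyperplane i₀ c ↔ x i₀ = c := by
  simp [coordHyperplane]

lemma card_coordHyperplane (i₀ : ι) (c : F) :
    #(coordHyperplane i₀ c) = Fintype.card F ^ (Fintype.card ι - 1) := by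
  simpa [coordHyperplane, Fintype.piFinset_univ] using
    Fintype.card_filter_piFinset_const (univ : Finset F) i₀ c

variable [Field F]

def lineSlice (S : Finset (ι → F)) (v a : ι → F) : Finset F := {t | a + t • v ∈ S}

lemma sum_card_lineSlice (S : Finset (ι → F)) {i₀ : ι} {v : ι → F} (hv : v i₀ = 1) :
    ∑ a ∈ coordHyperplane i₀ 0, #(lineSlice S v a) = #S := by
  calc ∑ a ∈ coordHyperplane i₀ 0, #(lineSlice S v a)
      = ∑ q ∈ coordHyperplane i₀ 0 ×ˢ univ, if q.1 + q.2 • v ∈ S then 1 else 0 := by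
        rw [sum_product]
        simp only [lineSlice, card_filter]
        rfl
    _ = ∑ x, if x ∈ S then 1 else 0 := by
        refine sum_nbij' (fun q => q.1 + q.2 • v) (fun x => (x - x i₀ • v, x i₀))
          (by simp) (fun x _ => by simp [hv]) (fun q hq => ?_) (fun x _ => by simp)
          (fun _ _ => rfl)
        simp_all
    _ = #S := by simp

lemma sum_card_offDiag_lineSlice_le (S : Finset (ι → F)) (i₀ : ι) :
    ∑ v ∈ coordHyperplane i₀ 1, ∑ a ∈ coordHyperplane i₀ 0, #(lineSlice S v a).offDiag
      ≤ #S ^ 2 := by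
  rw [← sum_product (f := fun q : (ι → F) × (ι → F) => #(lineSlice S q.1 q.2).offDiag),
    ← card_sigma, sq, ← card_product]
  refine card_le_card_of_injOn (fun x => (x.1.2 + x.2.1 • x.1.1, x.1.2 + x.2.2 • x.1.1)) ?_ ?_
  · intro x hx
    simp_all [lineSlice]
  · rintro ⟨⟨v, a⟩, ⟨t, s⟩⟩ hx ⟨⟨v', a'⟩, ⟨t', s'⟩⟩ hx' heq
    simp only [coe_sigma, Set.mem_sigma_iff, coe_product, Set.mem_prod, mem_coe,
      mem_coordHyperplane, mem_offDiag] at hx hx'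
    obtain ⟨⟨hv, ha⟩, -, -, hts⟩ := hx
    obtain ⟨⟨hv', ha'⟩, -, -, -⟩ := hx'
    obtain ⟨e₁, e₂⟩ := Prod.ext_iff.1 heq
    dsimp only at e₁ e₂
    obtain rfl : t = t' := by simpa [hv, ha, hv', ha'] using congrFun e₁ i₀
    obtain rfl : s = s' := by simpa [hv, ha, hv', ha'] using congrFun e₂ i₀
    obtain rfl : v = v' := smul_right_injective _ (sub_ne_zero.2 hts)
      (by linear_combination (norm := module) e₁ - e₂)
    obtain rfl : a = a' := add_right_cancel e₁
    rfl

theorem exists_lineSlice_sq_sub_le (S : Finset (ι → F)) (i₀ : ι) :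
    ∃ v a, ((#(lineSlice S v a) : ℝ) - #S / Fintype.card F ^ (Fintype.card ι - 1)) ^ 2
      ≤ #S / Fintype.card F ^ (Fintype.card ι - 1) := by
  have hK : (Fintype.card F ^ (Fintype.card ι - 1) : ℝ) ≠ 0 := by positivity
  have hsum : ∑ v ∈ coordHyperplane i₀ 1, ∑ a ∈ coordHyperplane i₀ 0, #(lineSlice S v a)
      = Fintype.card F ^ (Fintype.card ι - 1) * #S := by
    rw [sum_congr rfl fun v hv => sum_card_lineSlice S (mem_coordHyperplane.1 hv), sum_const,
      card_coordHyperplane, smul_eq_mul]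
  have hsq : ∑ v ∈ coordHyperplane i₀ 1, ∑ a ∈ coordHyperplane i₀ 0, #(lineSlice S v a) ^ 2
      ≤ Fintype.card F ^ (Fintype.card ι - 1) * #S + #S ^ 2 := by
    have hsplit : ∀ v a,
        #(lineSlice S v a) ^ 2 = #(lineSlice S v a) + #(lineSlice S v a).offDiag := by
      intro v a
      rw [offDiag_card, sq, Nat.add_sub_cancel' (Nat.le_mul_self _)]
    simp_rw [hsplit, sum_add_distrib, hsum]
    exact Nat.add_le_add_left (sum_card_offDiag_lineSlice_le S i₀) _
  obtain ⟨⟨v, a⟩, -, h⟩ := exists_sq_sub_le_of_sum_sq_le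
    (s := coordHyperplane i₀ 1 ×ˢ coordHyperplane i₀ 0)
    ⟨(fun _ => 1, 0), by simp⟩ (fun q => (#(lineSlice S q.1 q.2) : ℝ))
    (μ := #S / Fintype.card F ^ (Fintype.card ι - 1))
    (c := #S / Fintype.card F ^ (Fintype.card ι - 1))
    (by
      rw [sum_product, card_product, card_coordHyperplane, card_coordHyperplane]
      have := congrArg (Nat.cast (R := ℝ)) hsum
      push_cast at this ⊢
      rw [this]
      field_simp)
    (by
      rw [sum_product, card_product, card_coordHyperplane, card_coordHyperplane]
      have := (Nat.cast_le (α := ℝ)).2 hsq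
      push_cast at this ⊢
      refine this.trans_eq ?_
      field_simp
      ring)
  exact ⟨v, a, h⟩

end Lines

/-- There is an absolute constant `C > 0` such that: if every
`h : ZMod p → E ∪ {0}` satisfies `‖ĥ‖₁ ≥ F(p, |supp h|/p)`, then every
`f : (ZMod p)^d → E ∪ {0}` (`d ≥ 2`) with `|supp f| = δ p^d`, `δ ≥ C p⁻¹`, satisfies
`‖f̂‖₁ ≥ F(p, δ')` for some `δ'` with `δ' p ∈ ℤ` and `|δ' - δ| ≤ C δ^{1/2} p^{-1/2}`. -/
theorem stmt3 :
    ∃ C > (0:ℝ), ∀ (E : Set ℂ) (p : ℕ) [Fact p.Prime] (d : ℕ), 2 ≤ d →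
      ∀ F : ℕ × ℝ → ℝ,
        (∀ h : ZMod p → ℂ, (∀ x, h x ∈ E ∪ {0}) →
          F (p, ((Function.support h).ncard : ℝ) / p) ≤ wiener1 h) →
        ∀ (f : (Fin d → ZMod p) → ℂ) (δ : ℝ),
          (∀ x, f x ∈ E ∪ {0}) →
          ((Function.support f).ncard : ℝ) = δ * (p : ℝ) ^ d →
          C * (p : ℝ)⁻¹ ≤ δ →
          ∃ δ' : ℝ, (∃ m : ℤ, δ' * p = (m : ℝ)) ∧
            |δ' - δ| ≤ C * δ ^ ((1:ℝ)/2) * (p : ℝ) ^ (-(1:ℝ)/2) ∧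
            F (p, δ') ≤ wienerd f := by
  refine ⟨1, one_pos, fun E p _ d hd F hF f δ hfE hsupp hδ => ?_⟩
  classical
  have hp : (0 : ℝ) < p := Nat.cast_pos.2 (Fact.out : p.Prime).pos
  set S : Finset (Fin d → ZMod p) := {x | f x ≠ 0}
  have hS : (#S : ℝ) / p ^ (d - 1) = δ * p := by
    have hsuppS : Function.support f = S := by ext; simp [S]
    rw [← Set.ncard_coe_finset, ← hsuppS, hsupp, ← Nat.sub_add_cancel (by omega : 1 ≤ d),
      pow_succ, Nat.add_sub_cancel]
    field_simp
  obtain ⟨v, a, hva⟩ := exists_lineSlice_sq_sub_le S (⟨0, by omega⟩ : Fin d)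
  rw [ZMod.card, Fintype.card_fin, hS] at hva
  refine ⟨#(lineSlice S v a) / p, ⟨#(lineSlice S v a), div_mul_cancel₀ _ hp.ne'⟩, ?_, ?_⟩
  · rw [one_mul]
    exact abs_div_sub_le_of_sq_sub_le hp (le_trans (by positivity) hδ) hva
  · have hline :
        (Function.support fun t : ZMod p => f (a + t • v)).ncard = #(lineSlice S v a) := by
      rw [← Set.ncard_coe_finset]
      congr 1
      ext t
      simp [lineSlice, S]
    calc F (p, #(lineSlice S v a) / p) ≤ wiener1 (fun t : ZMod p => f (a + t • v)) := by
          rw [← hline]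
          exact hF _ fun t => hfE _
      _ ≤ wienerd f := wiener1_comp_line_le f v a
end

section
/- There is an absolute constant c > 0 such that for every prime p and every f : ℤ/pℤ → ℂ with |f(x)| ≥ 1 for all x in S := supp f (S nonempty), setting M := max_{x} |f(x)|, the additive energy of S satisfies T₂(S) ≥ c |S|³ / (M ‖f̂‖₁²). -/
open scoped BigOperators

/-- The additive energy `T₂(S)`: the number of quadruples
`(x₁, x₂, x₁', x₂') ∈ S⁴` with `x₁ + x₂ = x₁' + x₂'`. -/
noncomputable def T2 {p : ℕ} (S : Set (ZMod p)) : ℕ :=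
  Set.ncard {q : ZMod p × ZMod p × ZMod p × ZMod p |
    q.1 ∈ S ∧ q.2.1 ∈ S ∧ q.2.2.1 ∈ S ∧ q.2.2.2 ∈ S ∧ q.1 + q.2.1 = q.2.2.1 + q.2.2.2}

/-!
Put `L = ∑ |f|` and `g = conj f / |f|`, so that `∑ f g = L` and `|g| ≤ 1_S`. For the unnormalised
transform `𝓕`, pairing gives `N L ≤ ∑ |𝓕 f| |𝓕 g (-·)|`, and Hölder (two Cauchy–Schwarz steps)
gives `(N L)⁴ ≤ (∑ |𝓕 f|)² (∑ |𝓕 f|²) (∑ |𝓕 g|⁴)`. Parseval bounds `∑ |𝓕 f|² = N ∑ |f|² ≤ N M L`;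
since `(𝓕 g)² = 𝓕 (g ∗ g)`, also `∑ |𝓕 g|⁴ = N ∑ |g ∗ g|² ≤ N E(S)`, as `|g ∗ g (z)|` is at most
the number of ways to write `z = x + y` with `x, y ∈ S`. Hence `L³ ≤ M ‖f̂‖₁² E(S)`, and `|S| ≤ L`
gives the theorem with `c = 1`.
-/

open Finset ZMod
open scoped ComplexConjugate Combinatorics.Additive

namespace ZMod

variable {N : ℕ} [NeZero N]

noncomputable def conv (f g : ZMod N → ℂ) (z : ZMod N) : ℂ := ∑ x, f x * g (z - x)

lemma dft_conv (f g : ZMod N → ℂ) (ξ : ZMod N) : 𝓕 (conv f g) ξ = 𝓕 f ξ * 𝓕 g ξ := by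
  simp only [dft_apply, conv, smul_eq_mul]
  rw [sum_mul_sum]
  simp only [mul_sum]
  rw [sum_comm]
  refine sum_congr rfl fun x _ => ?_
  rw [← Equiv.sum_comp (Equiv.addLeft x)]
  refine sum_congr rfl fun y _ => ?_
  simp only [Equiv.coe_addLeft, add_sub_cancel_left, add_mul, neg_add, AddChar.map_add_eq_mul]
  ring

lemma sum_dft (f : ZMod N → ℂ) : ∑ ξ, 𝓕 f ξ = N * f 0 := by
  rw [← dft_apply_zero, dft_dft]
  simp

lemma sum_dft_mul_dft_neg (f g : ZMod N → ℂ) :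
    ∑ ξ, 𝓕 f ξ * 𝓕 g (-ξ) = N * ∑ x, f x * g x := by
  simpa only [dft_conv, dft_comp_neg, conv, zero_sub, neg_neg] using
    sum_dft (conv f fun x => g (-x))

lemma dft_conj_neg (f : ZMod N → ℂ) (ξ : ZMod N) :
    𝓕 (fun x => conj (f x)) (-ξ) = conj (𝓕 f ξ) := by
  simp only [dft_apply, map_sum, smul_eq_mul, map_mul, ← AddChar.map_neg_eq_conj, mul_neg, neg_neg]

lemma sum_norm_dft_sq (f : ZMod N → ℂ) :
    ∑ ξ, ‖𝓕 f ξ‖ ^ 2 = N * ∑ x, ‖f x‖ ^ 2 := by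
  have := sum_dft_mul_dft_neg f fun x => conj (f x)
  simp only [dft_conj_neg, Complex.mul_conj, Complex.normSq_eq_norm_sq] at this
  exact_mod_cast this

end ZMod

section WienerNorm

variable {N : ℕ} [NeZero N]

lemma ft1_eq_inv_mul_dft (f : ZMod N → ℂ) (ξ : ZMod N) : ft1 f ξ = (N : ℂ)⁻¹ * 𝓕 f ξ := by
  simp only [ft1, dft_apply, smul_eq_mul, AddChar.map_neg_eq_inv, stdAddChar_apply, toCircle_apply]
  congr 1
  refine sum_congr rfl fun x _ => ?_
  rw [mul_comm x, mul_comm (f x), ← Complex.exp_neg]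
  congr 2
  ring

lemma sum_norm_dft_eq_mul_wiener1 (f : ZMod N → ℂ) : ∑ ξ, ‖𝓕 f ξ‖ = N * wiener1 f := by
  simp [wiener1, ft1_eq_inv_mul_dft, mul_sum, NeZero.ne]

end WienerNorm

lemma T2_coe_eq_addEnergy {n : ℕ} (S : Finset (ZMod n)) : T2 (S : Set (ZMod n)) = E[S] := by
  rw [T2, addEnergy_eq_card_filter, ← Set.ncard_coe_finset]
  refine Set.ncard_congr (fun q _ => ((q.1, q.2.1), q.2.2.1, q.2.2.2)) ?_ ?_ ?_ <;>
    simp +contextual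

lemma sum_mul_pow_four_le {ι : Type*} (s : Finset ι) {a : ι → ℝ} (b : ι → ℝ)
    (ha : ∀ i ∈ s, 0 ≤ a i) :
    (∑ i ∈ s, a i * b i) ^ 4 ≤
      (∑ i ∈ s, a i) ^ 2 * (∑ i ∈ s, a i ^ 2) * ∑ i ∈ s, b i ^ 4 := by
  have h₁ : (∑ i ∈ s, a i * b i) ^ 2 ≤ (∑ i ∈ s, a i) * ∑ i ∈ s, a i * b i ^ 2 :=
    sum_sq_le_sum_mul_sum_of_sq_le_mul s ha
      (fun i hi => mul_nonneg (ha i hi) (sq_nonneg _)) fun i _ => le_of_eq (by ring)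
  have h₂ : (∑ i ∈ s, a i * b i ^ 2) ^ 2 ≤ (∑ i ∈ s, a i ^ 2) * ∑ i ∈ s, b i ^ 4 := by
    have h := sum_mul_sq_le_sq_mul_sq s a fun i => b i ^ 2
    simp_rw [← pow_mul] at h
    exact h
  calc (∑ i ∈ s, a i * b i) ^ 4 = ((∑ i ∈ s, a i * b i) ^ 2) ^ 2 := by ring
    _ ≤ ((∑ i ∈ s, a i) * ∑ i ∈ s, a i * b i ^ 2) ^ 2 := pow_le_pow_left₀ (sq_nonneg _) h₁ 2
    _ = (∑ i ∈ s, a i) ^ 2 * (∑ i ∈ s, a i * b i ^ 2) ^ 2 := by ring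
    _ ≤ (∑ i ∈ s, a i) ^ 2 * ((∑ i ∈ s, a i ^ 2) * ∑ i ∈ s, b i ^ 4) := by gcongr
    _ = _ := by ring

-- Where `f` vanishes, so does `conjPhase f`, since `0 / 0 = 0`.
noncomputable def conjPhase {α : Type*} (f : α → ℂ) (x : α) : ℂ := conj (f x) / ‖f x‖

section ConjPhase

variable {α : Type*} (f : α → ℂ)

lemma mul_conjPhase (x : α) : f x * conjPhase f x = ‖f x‖ := by
  rcases eq_or_ne (f x) 0 with hx | hx
  · simp [conjPhase, hx]
  · rw [conjPhase, mul_div_assoc', Complex.mul_conj, Complex.normSq_eq_norm_sq]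
    field_simp [hx]
    push_cast
    ring

lemma norm_conjPhase_le_one (x : α) : ‖conjPhase f x‖ ≤ 1 := by
  simpa [conjPhase, norm_div] using div_self_le_one ‖f x‖

variable {f} in
lemma conjPhase_eq_zero {x : α} (hx : f x = 0) : conjPhase f x = 0 := by
  simp [conjPhase, hx]

end ConjPhase

section Energy

variable {N : ℕ} [NeZero N]

lemma norm_conv_self_le_card {g : ZMod N → ℂ} {S : Finset (ZMod N)} (hg₀ : ∀ x ∉ S, g x = 0)
    (hg₁ : ∀ x, ‖g x‖ ≤ 1) (z : ZMod N) :
    ‖conv g g z‖ ≤ #{xy ∈ S ×ˢ S | xy.1 + xy.2 = z} := by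
  have hterm : ∀ x, ‖g x * g (z - x)‖ ≤ if x ∈ S ∧ z - x ∈ S then 1 else 0 := by
    intro x
    rw [norm_mul]
    split_ifs with hx
    · exact mul_le_one₀ (hg₁ x) (norm_nonneg _) (hg₁ _)
    · rcases not_and_or.1 hx with hx | hx <;> simp [hg₀ _ hx]
  have hcard : #{x | x ∈ S ∧ z - x ∈ S} = #{xy ∈ S ×ˢ S | xy.1 + xy.2 = z} :=
    card_nbij' (fun x => (x, z - x)) Prod.fst
      (fun x hx => by
        simp only [coe_filter, mem_univ, true_and, Set.mem_ofPred_eq, mem_product] at hx ⊢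
        exact ⟨hx, add_sub_cancel _ _⟩)
      (fun xy hxy => by
        simp only [coe_filter, mem_univ, true_and, Set.mem_ofPred_eq, mem_product] at hxy ⊢
        rw [← hxy.2, add_sub_cancel_left]
        exact hxy.1)
      (fun x _ => rfl)
      (fun xy hxy => by
        simp only [coe_filter, Set.mem_ofPred_eq, mem_product] at hxy
        exact Prod.ext rfl (by simp [← hxy.2]))
  calc ‖conv g g z‖ ≤ ∑ x, ‖g x * g (z - x)‖ := norm_sum_le _ _
    _ ≤ ∑ x, if x ∈ S ∧ z - x ∈ S then (1 : ℝ) else 0 := sum_le_sum fun x _ => hterm x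
    _ = #{xy ∈ S ×ˢ S | xy.1 + xy.2 = z} := by rw [sum_boole, hcard]

lemma sum_norm_dft_pow_four_le_mul_addEnergy {g : ZMod N → ℂ} {S : Finset (ZMod N)}
    (hg₀ : ∀ x ∉ S, g x = 0) (hg₁ : ∀ x, ‖g x‖ ≤ 1) : ∑ ξ, ‖𝓕 g ξ‖ ^ 4 ≤ N * E[S] := by
  calc ∑ ξ, ‖𝓕 g ξ‖ ^ 4 = ∑ ξ, ‖𝓕 (conv g g) ξ‖ ^ 2 := by
        refine sum_congr rfl fun ξ _ => ?_
        rw [dft_conv, ← sq, norm_pow, ← pow_mul]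
    _ = N * ∑ z, ‖conv g g z‖ ^ 2 := sum_norm_dft_sq _
    _ ≤ N * ∑ z, (#{xy ∈ S ×ˢ S | xy.1 + xy.2 = z} : ℝ) ^ 2 := by
        gcongr with z
        exact norm_conv_self_le_card hg₀ hg₁ z
    _ = N * E[S] := by rw [addEnergy_eq_sum_sq]; push_cast; rfl

lemma mul_sum_norm_le_sum_norm_dft_mul (f : ZMod N → ℂ) :
    N * ∑ x, ‖f x‖ ≤ ∑ ξ, ‖𝓕 f ξ‖ * ‖𝓕 (conjPhase f) (-ξ)‖ :=
  calc N * ∑ x, ‖f x‖ = ‖∑ ξ, 𝓕 f ξ * 𝓕 (conjPhase f) (-ξ)‖ := by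
        rw [sum_dft_mul_dft_neg, norm_mul, Complex.norm_natCast]
        simp only [mul_conjPhase, ← Complex.ofReal_sum, Complex.norm_real, Real.norm_eq_abs]
        rw [abs_of_nonneg (sum_nonneg fun x _ => norm_nonneg _)]
    _ ≤ ∑ ξ, ‖𝓕 f ξ‖ * ‖𝓕 (conjPhase f) (-ξ)‖ := by
        simpa only [norm_mul] using norm_sum_le univ fun ξ => 𝓕 f ξ * 𝓕 (conjPhase f) (-ξ)

lemma sum_norm_dft_sq_le {f : ZMod N → ℂ} {M : ℝ} (hM : ∀ x, ‖f x‖ ≤ M) :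
    ∑ ξ, ‖𝓕 f ξ‖ ^ 2 ≤ N * (M * ∑ x, ‖f x‖) := by
  rw [sum_norm_dft_sq, mul_sum univ _ M]
  gcongr with x
  rw [sq]
  exact mul_le_mul_of_nonneg_right (hM x) (norm_nonneg _)

theorem sum_norm_pow_three_le_mul_wiener1_sq_mul_addEnergy {f : ZMod N → ℂ} {S : Finset (ZMod N)}
    (hS : ∀ x ∉ S, f x = 0) {M : ℝ} (hM : ∀ x, ‖f x‖ ≤ M) :
    (∑ x, ‖f x‖) ^ 3 ≤ M * wiener1 f ^ 2 * E[S] := by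
  set L := ∑ x, ‖f x‖
  set g := conjPhase f
  have hB : ∑ ξ, ‖𝓕 g (-ξ)‖ ^ 4 ≤ N * E[S] := by
    rw [Fintype.sum_equiv (.neg _) (fun ξ => ‖𝓕 g (-ξ)‖ ^ 4) (fun ξ => ‖𝓕 g ξ‖ ^ 4) fun _ => rfl]
    exact sum_norm_dft_pow_four_le_mul_addEnergy
      (fun x hx => conjPhase_eq_zero (hS x hx)) (norm_conjPhase_le_one f)
  have hM₀ : 0 ≤ M := (norm_nonneg _).trans (hM 0)
  have key : (N : ℝ) ^ 4 * (L ^ 3 * L) ≤ N ^ 4 * (M * wiener1 f ^ 2 * E[S] * L) :=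
    calc (N : ℝ) ^ 4 * (L ^ 3 * L) = (N * L) ^ 4 := by ring
      _ ≤ (∑ ξ, ‖𝓕 f ξ‖ * ‖𝓕 g (-ξ)‖) ^ 4 := by
          gcongr
          exact mul_sum_norm_le_sum_norm_dft_mul f
      _ ≤ (∑ ξ, ‖𝓕 f ξ‖) ^ 2 * (∑ ξ, ‖𝓕 f ξ‖ ^ 2) * ∑ ξ, ‖𝓕 g (-ξ)‖ ^ 4 :=
          sum_mul_pow_four_le _ _ fun ξ _ => norm_nonneg _
      _ ≤ (N * wiener1 f) ^ 2 * (N * (M * L)) * (N * E[S]) := by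
          rw [sum_norm_dft_eq_mul_wiener1]
          gcongr
          exact sum_norm_dft_sq_le hM
      _ = N ^ 4 * (M * wiener1 f ^ 2 * E[S] * L) := by ring
  have hL₀ : 0 ≤ L := sum_nonneg fun x _ => norm_nonneg (f x)
  rcases hL₀.eq_or_lt with hL₀ | hL₀
  · rw [← hL₀, zero_pow three_ne_zero]
    positivity
  · have hN : (0 : ℝ) < N ^ 4 := pow_pos (Nat.cast_pos.2 (NeZero.pos N)) 4
    exact le_of_mul_le_mul_right (le_of_mul_le_mul_left key hN) hL₀

end Energy

/-- There is an absolute constant `c > 0` such that for every prime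
`p` and every `f : ZMod p → ℂ` with `|f(x)| ≥ 1` on `S = supp f` (nonempty), setting
`M = max |f|`, one has `T₂(S) ≥ c |S|³ / (M ‖f̂‖₁²)`. -/
theorem stmt9 :
    ∃ c > (0:ℝ), ∀ (p : ℕ) [Fact p.Prime], ∀ (f : ZMod p → ℂ) (M : ℝ),
      (Function.support f).Nonempty →
      (∀ x ∈ Function.support f, 1 ≤ ‖f x‖) →
      IsGreatest (Set.range fun x => ‖f x‖) M →
      c * ((Function.support f).ncard : ℝ) ^ 3 / (M * wiener1 f ^ 2) ≤
        (T2 (Function.support f) : ℝ) := by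
  refine ⟨1, one_pos, fun p _ f M _ hf hM => ?_⟩
  obtain ⟨S, hS⟩ : ∃ S : Finset (ZMod p), ↑S = Function.support f :=
    ⟨_, (Set.toFinite _).coe_toFinset⟩
  rw [← hS, Set.ncard_coe_finset, T2_coe_eq_addEnergy, one_mul]
  have hcard : (#S : ℝ) ≤ ∑ x, ‖f x‖ :=
    calc (#S : ℝ) = ∑ x ∈ S, 1 := by simp
      _ ≤ ∑ x ∈ S, ‖f x‖ := sum_le_sum fun x hx => hf x (hS ▸ hx)
      _ ≤ ∑ x, ‖f x‖ := sum_le_univ_sum_of_nonneg fun x => norm_nonneg _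
  have hM₀ : 0 ≤ M := by
    obtain ⟨x, rfl⟩ := hM.1
    exact norm_nonneg _
  refine div_le_of_le_mul₀ (by positivity) (by positivity) ?_
  calc (#S : ℝ) ^ 3 ≤ (∑ x, ‖f x‖) ^ 3 := by gcongr
    _ ≤ M * wiener1 f ^ 2 * E[S] :=
        sum_norm_pow_three_le_mul_wiener1_sq_mul_addEnergy
          (fun x hx => Function.notMem_support.1 (hS ▸ hx)) fun x => hM.2 ⟨x, rfl⟩
    _ = E[S] * (M * wiener1 f ^ 2) := by ring
end

section
/- Let p be a prime, d ≥ 2, and A ⊆ (ℤ/pℤ)^d with |A| = δ p^d. Then there exists a hyperplane L ⊂ (ℤ/pℤ)^d such that | |A ∩ L| − δ p^{d−1} | ≤ δ^{1/2} p^{(d−1)/2}. -/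
open scoped BigOperators

/-!
Write `N(η, u) = |A ∩ {x · η = u}|` and `m = |A| / p`. Counting pairs `(x, y) ∈ A²` with
`x · η = y · η`, using that `{η : (x - y) · η = 0}` has `p^d` or `p^(d-1)` elements, gives the
exact second moment `∑_η ∑_u (N(η, u) - m)² = |A| (p^d - p^(d-1))`. This is at most
`|A| (p^d - 1)`, which is `m` times the number of pairs `(η, u)` with `η ≠ 0`, so one of these
pairs has `(N(η, u) - m)² ≤ m = δ p^(d-1)`.
-/

open Finset Matrix

lemma sum_sq_card_filter_eq {α β : Type*} [Fintype β] [DecidableEq β] (s : Finset α)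
    (f : α → β) : ∑ u, #{x ∈ s | f x = u} ^ 2 = #{xy ∈ s ×ˢ s | f xy.1 = f xy.2} := by
  classical
  rw [card_eq_sum_card_fiberwise (f := fun xy => f xy.1) (t := univ) fun _ _ => mem_univ _]
  refine sum_congr rfl fun u _ => ?_
  rw [sq, ← card_product, filter_filter]
  congr 1
  ext ⟨x, y⟩
  simp only [mem_product, mem_filter]
  constructor
  · rintro ⟨⟨hx, rfl⟩, hy, hyx⟩
    exact ⟨⟨hx, hy⟩, hyx.symm, rfl⟩
  · rintro ⟨⟨hx, hy⟩, hxy, rfl⟩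
    exact ⟨⟨hx, rfl⟩, hy, hxy.symm⟩

lemma sum_sq_sub_div_card {α : Type*} (s : Finset α) (X : α → ℝ) :
    ∑ u ∈ s, (X u - (∑ v ∈ s, X v) / #s) ^ 2 = ∑ u ∈ s, X u ^ 2 - (∑ v ∈ s, X v) ^ 2 / #s := by
  rcases s.eq_empty_or_nonempty with rfl | hs
  · simp
  have hcard : (#s : ℝ) ≠ 0 := by exact_mod_cast hs.card_pos.ne'
  simp only [sub_sq, sum_add_distrib, sum_sub_distrib, sum_const, nsmul_eq_mul, ← sum_mul,
    ← mul_sum]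
  field_simp
  ring

lemma sqrt_mul_pow_eq_rpow {a x : ℝ} (ha : 0 ≤ a) (hx : 0 ≤ x) (n : ℕ) :
    √(a * x ^ n) = a ^ ((1 : ℝ) / 2) * x ^ ((n : ℝ) / 2) := by
  rw [Real.sqrt_mul ha, Real.sqrt_eq_rpow, Real.sqrt_eq_rpow, ← Real.rpow_natCast,
    ← Real.rpow_mul hx, mul_one_div]

section Hyperplanes

variable {F ι : Type*} [Field F] [Fintype F] [DecidableEq F] [Fintype ι] [DecidableEq ι]

lemma card_filter_dotProduct_eq_zero {v : ι → F} (hv : v ≠ 0) :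
    #{η | v ⬝ᵥ η = 0} = Fintype.card F ^ (Fintype.card ι - 1) := by
  set f := dotProductEquiv F ι v
  have hf : f ≠ 0 := by simpa [f] using hv
  have hker := Module.Dual.finrank_ker_add_one_of_ne_zero hf
  rw [Module.finrank_fintype_fun_eq_card] at hker
  calc #{η | v ⬝ᵥ η = 0} = Nat.card (LinearMap.ker f) := by
        rw [← Fintype.card_subtype, ← Nat.card_eq_fintype_card]
        rfl
    _ = Fintype.card F ^ Module.finrank F (LinearMap.ker f) := by
        rw [Module.natCard_eq_pow_finrank (K := F), Nat.card_eq_fintype_card]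
    _ = Fintype.card F ^ (Fintype.card ι - 1) := by rw [← hker, Nat.add_sub_cancel]

lemma card_filter_dotProduct_eq_dotProduct (x y : ι → F) :
    #{η | x ⬝ᵥ η = y ⬝ᵥ η} = if x = y then Fintype.card F ^ Fintype.card ι
      else Fintype.card F ^ (Fintype.card ι - 1) := by
  split_ifs with hxy
  · simp [hxy]
  · rw [← card_filter_dotProduct_eq_zero (sub_ne_zero.mpr hxy)]
    simp only [sub_dotProduct, sub_eq_zero]

lemma sum_sum_sq_card_filter_dotProduct (A : Finset (ι → F)) :
    ∑ η, ∑ u, (#{x ∈ A | x ⬝ᵥ η = u} : ℝ) ^ 2 =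
      #A ^ 2 * Fintype.card F ^ (Fintype.card ι - 1) +
        #A * (Fintype.card F ^ Fintype.card ι - Fintype.card F ^ (Fintype.card ι - 1)) := by
  have hpairs : ∑ η, ∑ u, #{x ∈ A | x ⬝ᵥ η = u} ^ 2 =
      ∑ x ∈ A, ∑ y ∈ A, #{η | x ⬝ᵥ η = y ⬝ᵥ η} := by
    simp only [sum_sq_card_filter_eq]
    simp only [card_filter, sum_product]
    rw [sum_comm]
    refine sum_congr rfl fun x _ => ?_
    rw [sum_comm]
  simp only [← Nat.cast_pow, ← Nat.cast_sum, hpairs]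
  push_cast
  simp only [card_filter_dotProduct_eq_dotProduct, apply_ite (Nat.cast (R := ℝ)), Nat.cast_pow]
  set Q : ℝ := (Fintype.card F : ℝ) ^ Fintype.card ι
  set R : ℝ := (Fintype.card F : ℝ) ^ (Fintype.card ι - 1)
  have hrow : ∀ x ∈ A, ∑ y ∈ A, (if x = y then Q else R) = #A * R + (Q - R) := fun x hx => by
    simp only [fun y => show (if x = y then Q else R) = R + if x = y then Q - R else 0 by
      split_ifs <;> ring, sum_add_distrib, sum_const, nsmul_eq_mul, sum_ite_eq, if_pos hx]
  rw [sum_congr rfl hrow, sum_const, nsmul_eq_mul]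
  ring

lemma sum_sum_sq_card_filter_dotProduct_sub [Nonempty ι] (A : Finset (ι → F)) :
    ∑ η, ∑ u, ((#{x ∈ A | x ⬝ᵥ η = u} : ℝ) - #A / Fintype.card F) ^ 2 =
      #A * (Fintype.card F ^ Fintype.card ι - Fintype.card F ^ (Fintype.card ι - 1)) := by
  have hrow (η : ι → F) : ∑ u, ((#{x ∈ A | x ⬝ᵥ η = u} : ℝ) - #A / Fintype.card F) ^ 2 =
      ∑ u, (#{x ∈ A | x ⬝ᵥ η = u} : ℝ) ^ 2 - #A ^ 2 / Fintype.card F := by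
    have := sum_sq_sub_div_card univ fun u => (#{x ∈ A | x ⬝ᵥ η = u} : ℝ)
    rwa [← Nat.cast_sum, ← card_eq_sum_card_fiberwise fun _ _ => mem_univ _, card_univ] at this
  have hq : (Fintype.card F : ℝ) ^ Fintype.card ι =
      Fintype.card F * Fintype.card F ^ (Fintype.card ι - 1) := by
    rw [← pow_succ', Nat.sub_add_cancel Fintype.card_pos]
  have hq0 : (Fintype.card F : ℝ) ≠ 0 := by exact_mod_cast Fintype.card_ne_zero
  rw [sum_congr rfl fun η _ => hrow η, sum_sub_distrib, sum_sum_sq_card_filter_dotProduct,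
    sum_const, card_univ, Fintype.card_fun, nsmul_eq_mul, Nat.cast_pow, hq]
  field_simp
  ring

theorem exists_sq_card_filter_dotProduct_sub_le [Nonempty ι] (A : Finset (ι → F)) :
    ∃ η ≠ 0, ∃ u, ((#{x ∈ A | x ⬝ᵥ η = u} : ℝ) - #A / Fintype.card F) ^ 2 ≤
      #A / Fintype.card F := by
  set D : (ι → F) → ℝ :=
    fun η => ∑ u, ((#{x ∈ A | x ⬝ᵥ η = u} : ℝ) - #A / Fintype.card F) ^ 2
  have hfreq : (univ.erase (0 : ι → F)).Nonempty :=
    ⟨Pi.single (Classical.arbitrary ι) 1, by simp⟩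
  obtain ⟨η, hη, hDη⟩ : ∃ η ∈ univ.erase (0 : ι → F), D η ≤ #A := by
    refine exists_le_of_sum_le hfreq ?_
    calc ∑ η ∈ univ.erase 0, D η ≤ ∑ η, D η :=
          sum_le_sum_of_subset_of_nonneg (subset_univ _) fun η _ _ =>
            sum_nonneg fun _ _ => sq_nonneg _
      _ = #A * (Fintype.card F ^ Fintype.card ι - Fintype.card F ^ (Fintype.card ι - 1)) :=
          sum_sum_sq_card_filter_dotProduct_sub A
      _ ≤ ∑ η ∈ univ.erase (0 : ι → F), (#A : ℝ) := by
          rw [sum_const, card_erase_of_mem (mem_univ _), card_univ, Fintype.card_fun,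
            nsmul_eq_mul, Nat.cast_sub (Nat.one_le_iff_ne_zero.mpr
              (pow_ne_zero _ Fintype.card_ne_zero)), Nat.cast_pow, Nat.cast_one, mul_comm]
          gcongr
          exact one_le_pow₀ (by exact_mod_cast Fintype.card_pos)
  have hmean : ∑ _u : F, (#A / Fintype.card F : ℝ) = #A := by
    rw [sum_const, card_univ, nsmul_eq_mul]
    field_simp
  obtain ⟨u, -, hu⟩ := exists_le_of_sum_le univ_nonempty (hDη.trans_eq hmean.symm)
  exact ⟨η, ne_of_mem_erase hη, u, hu⟩

end Hyperplanes

/-- Let `p` be a prime, `d ≥ 2`, `A ⊆ (ZMod p)^d` with `|A| = δ p^d`.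
Then there is a hyperplane `L = {x : x·η = u}` (`η ≠ 0`) such that
`||A ∩ L| - δ p^{d-1}| ≤ δ^{1/2} p^{(d-1)/2}`. -/
theorem stmt12 (p : ℕ) [Fact p.Prime] (d : ℕ) (hd : 2 ≤ d)
    (A : Set (Fin d → ZMod p)) (δ : ℝ) (hA : (A.ncard : ℝ) = δ * (p : ℝ) ^ d) :
    ∃ η : Fin d → ZMod p, η ≠ 0 ∧ ∃ u : ZMod p,
      |((A ∩ {x | ∑ i, x i * η i = u}).ncard : ℝ) - δ * (p : ℝ) ^ (d - 1)| ≤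
        δ ^ ((1:ℝ)/2) * (p : ℝ) ^ (((d : ℝ) - 1) / 2) := by
  classical
  have : Nonempty (Fin d) := ⟨⟨0, by omega⟩⟩
  obtain ⟨η, hη, u, hu⟩ := exists_sq_card_filter_dotProduct_sub_le A.toFinset
  have hp : (0 : ℝ) < p := by exact_mod_cast (Fact.out : p.Prime).pos
  have hδ : 0 ≤ δ :=
    nonneg_of_mul_nonneg_left (hA ▸ Nat.cast_nonneg _ : 0 ≤ δ * (p : ℝ) ^ d) (by positivity)
  have hmean : (#A.toFinset : ℝ) / Fintype.card (ZMod p) = δ * (p : ℝ) ^ (d - 1) := by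
    rw [← Set.ncard_eq_toFinset_card', hA, ZMod.card, ← pow_sub_mul_pow _ (by omega : 1 ≤ d),
      pow_one, mul_div_assoc, mul_div_cancel_right₀ _ hp.ne']
  have hslice : (A ∩ {x | ∑ i, x i * η i = u}).ncard = #{x ∈ A.toFinset | x ⬝ᵥ η = u} := by
    rw [Set.ncard_eq_toFinset_card']
    congr 1
    ext x
    simp only [Set.mem_toFinset, Set.mem_inter_iff, Finset.mem_filter]
    rfl
  rw [hmean] at hu
  refine ⟨η, hη, u, ?_⟩
  rw [hslice]
  calc _ ≤ √(δ * (p : ℝ) ^ (d - 1)) := Real.abs_le_sqrt hu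
    _ = _ := by rw [sqrt_mul_pow_eq_rpow hδ hp.le, Nat.cast_sub (by omega : 1 ≤ d), Nat.cast_one]
end

section
/- There is an absolute constant C > 0 such that the following holds. Let p be a prime, d ≥ 2, and A ⊆ (ℤ/pℤ)^d with |A| = δ p^d and δ ≥ C p^{-1}. Then there exists a line l ⊂ (ℤ/pℤ)^d such that | |A ∩ l| − δ p | ≤ δ^{1/2} p^{1/2} + C (δ^{1/2} + p^{-1/2}). -/
/-!
Parametrise the line through `c` with direction `b` by `u ↦ u • b + c` and count the parameters
landing in `A`. For each direction the counts sum to `q|A|` (with `q = |F|`), and their second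
moment is computable because for `u ≠ v` the map `(b, c) ↦ (u • b + c, v • b + c)` is a bijection
of `V × V`, so pairs of points of `A` are met exactly once. Over the lines with `b ≠ 0` the
variance of the count is then at most its mean `q|A|/|V| = δp`, so some line deviates from `δp` by at most
`√(δp)`.
-/

open scoped BigOperators

open Finset

section
variable {V : Type*} [AddCommGroup V] [Fintype V] [DecidableEq V] (A : Finset V)

lemma sum_ite_add_mem (x : V) : ∑ c : V, (if x + c ∈ A then 1 else 0) = #A :=
  (Fintype.sum_equiv (Equiv.addLeft x) _ (fun y => if y ∈ A then 1 else 0) fun _ => rfl).trans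
    (by simp)

end

variable {F V : Type*} [Field F] [AddCommGroup V] [Module F V] [DecidableEq V] (A : Finset V)

lemma sum_sum_ite_mem_mul_ite_mem_of_ne [Fintype V] {u v : F} (huv : u ≠ v) :
    ∑ b : V, ∑ c : V, (if u • b + c ∈ A then 1 else 0) * (if v • b + c ∈ A then 1 else 0) =
      #A ^ 2 := by
  have hinj : Function.Injective fun bc : V × V => (u • bc.1 + bc.2, v • bc.1 + bc.2) := by
    rintro ⟨b, c⟩ ⟨b', c'⟩ h
    obtain ⟨h1, h2⟩ := Prod.mk.inj h
    have hb : (u - v) • (b - b') = 0 := by linear_combination (norm := module) h1 - h2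
    obtain rfl : b = b' :=
      sub_eq_zero.mp ((smul_eq_zero.mp hb).resolve_left (sub_ne_zero.mpr huv))
    simpa using h1
  rw [← Fintype.sum_prod_type', Fintype.sum_bijective _ (Finite.injective_iff_bijective.mp hinj) _
    (fun xy => (if xy.1 ∈ A then 1 else 0) * (if xy.2 ∈ A then 1 else 0)) fun _ => rfl,
    Fintype.sum_prod_type' fun x y => (if x ∈ A then 1 else 0) * (if y ∈ A then 1 else 0),
    ← sum_mul_sum, sum_boole, sq]
  simp

variable [Fintype F]

variable (F) in
def lineCount (b c : V) : ℕ := #{u : F | u • b + c ∈ A}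

lemma lineCount_eq_sum (b c : V) :
    lineCount F A b c = ∑ u : F, if u • b + c ∈ A then 1 else 0 := by
  rw [lineCount, card_filter]

lemma lineCount_zero (c : V) : lineCount F A 0 c = if c ∈ A then Fintype.card F else 0 := by
  split_ifs with h <;> simp [lineCount, h]

lemma ncard_inter_line {b : V} (hb : b ≠ 0) (c : V) :
    ((A : Set V) ∩ {x | ∃ u : F, x = u • b + c}).ncard = lineCount F A b c := by
  have hinj : Function.Injective fun u : F => u • b + c :=
    fun u v h => smul_left_injective F hb (add_right_cancel h)
  rw [lineCount, ← card_image_of_injective _ hinj, ← Set.ncard_coe_finset]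
  congr 1
  ext x
  simp only [Set.mem_inter_iff, mem_coe, Set.mem_ofPred_eq, coe_image, coe_filter, mem_univ,
    true_and, Set.mem_image]
  constructor
  · rintro ⟨hx, u, rfl⟩
    exact ⟨u, hx, rfl⟩
  · rintro ⟨u, hu, rfl⟩
    exact ⟨hu, u, rfl⟩

variable [Fintype V]

lemma sum_lineCount (b : V) : ∑ c, lineCount F A b c = Fintype.card F * #A := by
  simp_rw [lineCount_eq_sum, sum_comm (s := univ (α := V)), sum_ite_add_mem]
  simp

lemma sum_sum_lineCount_sq :
    ∑ b, ∑ c, lineCount F A b c ^ 2 =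
      Fintype.card F * (Fintype.card V * #A + (Fintype.card F - 1) * #A ^ 2) := by
  classical
  have hpair (u v : F) : ∑ b : V, ∑ c : V,
      (if u • b + c ∈ A then 1 else 0) * (if v • b + c ∈ A then 1 else 0) =
        if u = v then Fintype.card V * #A else #A ^ 2 := by
    split_ifs with h
    · subst h
      simp_rw [ite_zero_mul_ite_zero, and_self, mul_one, sum_ite_add_mem]
      simp
    · exact sum_sum_ite_mem_mul_ite_mem_of_ne A h
  have hrow (u : F) : ∑ v : F, (if u = v then Fintype.card V * #A else #A ^ 2) =
      Fintype.card V * #A + (Fintype.card F - 1) * #A ^ 2 := by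
    rw [← add_sum_erase _ _ (mem_univ u), if_pos rfl,
      sum_congr rfl fun v hv => if_neg (ne_of_mem_erase hv).symm, sum_const,
      card_erase_of_mem (mem_univ u), card_univ, smul_eq_mul]
  calc ∑ b, ∑ c, lineCount F A b c ^ 2
      = ∑ u : F, ∑ v : F, ∑ b : V, ∑ c : V,
          (if u • b + c ∈ A then 1 else 0) * (if v • b + c ∈ A then 1 else 0) := by
        simp_rw [lineCount_eq_sum, sq, sum_mul_sum,
          sum_comm (s := (univ : Finset V)) (t := (univ : Finset F))]
    _ = _ := by simp_rw [hpair, hrow, sum_const, card_univ, smul_eq_mul]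

lemma sum_erase_zero_sum_lineCount :
    ∑ b ∈ univ.erase (0 : V), ∑ c, (lineCount F A b c : ℝ) =
      (Fintype.card V - 1) * (Fintype.card F * #A) := by
  rw [sum_congr rfl fun b _ => (by exact_mod_cast sum_lineCount (F := F) A b :
      ∑ c, (lineCount F A b c : ℝ) = Fintype.card F * #A), sum_const, nsmul_eq_mul,
    card_erase_of_mem (mem_univ _), card_univ, Nat.cast_pred Fintype.card_pos]

lemma sum_erase_zero_sum_lineCount_sq :
    ∑ b ∈ univ.erase (0 : V), ∑ c, (lineCount F A b c : ℝ) ^ 2 =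
      Fintype.card F * (Fintype.card V * #A + (Fintype.card F - 1) * #A ^ 2) -
        Fintype.card F ^ 2 * #A := by
  have htotal : ∑ b, ∑ c, (lineCount F A b c : ℝ) ^ 2 =
      Fintype.card F * (Fintype.card V * #A + (Fintype.card F - 1) * #A ^ 2) := by
    rw [← Nat.cast_pred Fintype.card_pos]
    exact_mod_cast sum_sum_lineCount_sq (F := F) A
  rw [sum_erase_eq_sub (mem_univ _), htotal]
  simp [lineCount_zero, mul_comm]

lemma sum_erase_zero_sum_sq_lineCount_sub_le [Nontrivial V] :
    ∑ b ∈ univ.erase (0 : V), ∑ c,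
        ((lineCount F A b c : ℝ) - Fintype.card F * #A / Fintype.card V) ^ 2 ≤
      (Fintype.card V - 1) * (Fintype.card F * #A) := by
  obtain ⟨b₀, hb₀⟩ := exists_ne (0 : V)
  have hq : 1 ≤ (Fintype.card F : ℝ) := by exact_mod_cast Fintype.card_pos
  have hqN : (Fintype.card F : ℝ) ≤ Fintype.card V := by
    exact_mod_cast Fintype.card_le_of_injective _ (smul_left_injective F hb₀)
  have hB : (#(univ.erase (0 : V)) : ℝ) = Fintype.card V - 1 := by
    rw [card_erase_of_mem (mem_univ _), card_univ, Nat.cast_pred Fintype.card_pos]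
  set μ : ℝ := Fintype.card F * #A / Fintype.card V
  have hexpand (x : ℝ) : (x - μ) ^ 2 = x ^ 2 - 2 * μ * x + μ ^ 2 := by ring
  simp only [hexpand, sum_add_distrib, sum_sub_distrib, ← mul_sum, sum_const, card_univ,
    sum_erase_zero_sum_lineCount, sum_erase_zero_sum_lineCount_sq, hB, nsmul_eq_mul]
  have hgap : 0 ≤ (Fintype.card F : ℝ) * #A *
      ((Fintype.card F - 1) * Fintype.card V + #A * (Fintype.card V - Fintype.card F)) := by
    have : (0 : ℝ) ≤ Fintype.card F - 1 := by linarith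
    have : (0 : ℝ) ≤ Fintype.card V - Fintype.card F := by linarith
    positivity
  have hN : (0 : ℝ) < Fintype.card V := by linarith
  simp only [μ]
  field_simp
  nlinarith [hgap]

theorem exists_line_sq_sub_le [Nontrivial V] :
    ∃ b ≠ (0 : V), ∃ c, ((lineCount F A b c : ℝ) - Fintype.card F * #A / Fintype.card V) ^ 2 ≤
      Fintype.card F * #A / Fintype.card V := by
  obtain ⟨b₀, hb₀⟩ := exists_ne (0 : V)
  set μ : ℝ := Fintype.card F * #A / Fintype.card V
  have hmean : ∑ b ∈ univ.erase (0 : V), ∑ _c : V, μ =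
      (Fintype.card V - 1) * (Fintype.card F * #A) := by
    have hN : (0 : ℝ) < Fintype.card V := by exact_mod_cast Fintype.card_pos
    simp only [sum_const, card_univ, card_erase_of_mem (mem_univ _), nsmul_eq_mul, μ,
      Nat.cast_pred Fintype.card_pos]
    field_simp
  obtain ⟨⟨b, c⟩, hbc, hle⟩ := exists_le_of_sum_le (s := (univ.erase 0) ×ˢ univ)
    (f := fun x => ((lineCount F A x.1 x.2 : ℝ) - μ) ^ 2) (g := fun _ => μ)
    ⟨(b₀, b₀), by simp [hb₀]⟩
    (by rw [sum_product, sum_product, hmean]; exact sum_erase_zero_sum_sq_lineCount_sub_le A)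
  exact ⟨b, ne_of_mem_erase (mem_product.mp hbc).1, c, hle⟩

/-- There is an absolute constant `C > 0` such that: for every prime
`p`, `d ≥ 2`, and `A ⊆ (ZMod p)^d` with `|A| = δ p^d` and `δ ≥ C p⁻¹`, there is a line
`l = {ub + c : u ∈ ZMod p}` (`b ≠ 0`) with
`||A ∩ l| - δ p| ≤ δ^{1/2} p^{1/2} + C(δ^{1/2} + p^{-1/2})`. -/
theorem stmt13 :
    ∃ C > (0:ℝ), ∀ (p : ℕ) [Fact p.Prime], ∀ d : ℕ, 2 ≤ d →
      ∀ (A : Set (Fin d → ZMod p)) (δ : ℝ),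
        (A.ncard : ℝ) = δ * (p : ℝ) ^ d → C * (p : ℝ)⁻¹ ≤ δ →
        ∃ b c : Fin d → ZMod p, b ≠ 0 ∧
          |((A ∩ {x | ∃ u : ZMod p, x = fun i => u * b i + c i}).ncard : ℝ) - δ * p| ≤
            δ ^ ((1:ℝ)/2) * (p : ℝ) ^ ((1:ℝ)/2) +
              C * (δ ^ ((1:ℝ)/2) + (p : ℝ) ^ (-(1:ℝ)/2)) := by
  classical
  refine ⟨1, one_pos, fun p _ d hd A δ hA _ => ?_⟩
  have : Nonempty (Fin d) := ⟨(⟨0, by omega⟩ : Fin d)⟩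
  have hp : (0 : ℝ) < p := Nat.cast_pos.mpr (Fact.out : p.Prime).pos
  obtain ⟨b, hb, c, hbc⟩ := exists_line_sq_sub_le (F := ZMod p) A.toFinset
  have hδ : 0 ≤ δ := nonneg_of_mul_nonneg_left (hA ▸ Nat.cast_nonneg _) (pow_pos hp d)
  have hmean : (Fintype.card (ZMod p) * #A.toFinset / Fintype.card (Fin d → ZMod p) : ℝ) =
      δ * p := by
    rw [← Set.ncard_eq_toFinset_card', hA]
    simp only [ZMod.card, Fintype.card_pi, prod_const, card_univ, Fintype.card_fin, Nat.cast_pow]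
    field_simp [hp.ne']
  have hline : ((A ∩ {x | ∃ u : ZMod p, x = fun i => u * b i + c i}).ncard : ℝ) =
      lineCount (ZMod p) A.toFinset b c := by
    rw [← ncard_inter_line A.toFinset hb c, Set.coe_toFinset]
    rfl
  refine ⟨b, c, hb, ?_⟩
  rw [hline]
  rw [hmean] at hbc
  calc _ ≤ √(δ * p) := Real.abs_le_sqrt hbc
    _ = δ ^ ((1:ℝ)/2) * (p : ℝ) ^ ((1:ℝ)/2) := by
      rw [Real.sqrt_mul hδ, Real.sqrt_eq_rpow, Real.sqrt_eq_rpow]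
    _ ≤ _ := le_add_of_nonneg_right (by positivity)
end

section
/- Let p be a prime, d ≥ 1, f : (ℤ/pℤ)^d → ℂ, and let l ⊂ (ℤ/pℤ)^d be a line parametrized as l = {ub + c : u ∈ ℤ/pℤ} with b ≠ 0. Define the restriction f_l : ℤ/pℤ → ℂ by f_l(u) = f(ub + c). Then ‖f̂‖₁ ≥ ‖f̂_l‖₁. -/
/-!
By Fourier inversion, `f (u • b + c) = ∑ ξ, f̂ ξ · e(ξ ⬝ᵥ c) · e(u · (ξ ⬝ᵥ b))`, so orthogonality
of the characters `u ↦ e(u · t)` of `ZMod p` shows that the Fourier coefficient of the restriction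
at `η` is the sum of `f̂ ξ · e(ξ ⬝ᵥ c)` over the hyperplane `ξ ⬝ᵥ b = η`. By the triangle inequality
its modulus is at most the sum of `‖f̂ ξ‖` over that hyperplane, and these hyperplanes partition the
frequencies.
-/

open scoped BigOperators

open Finset

namespace AddChar

variable {A M : Type*} [AddCommMonoid A] [CommMonoid M]

lemma map_sum_eq_prod_s14 {ι : Type*} (ψ : AddChar A M) (s : Finset ι) (g : ι → A) :
    ψ (∑ i ∈ s, g i) = ∏ i ∈ s, ψ (g i) := by
  classical
  induction s using Finset.induction_on with
  | empty => simp
  | insert a s ha ih => rw [sum_insert ha, prod_insert ha, map_add_eq_mul, ih]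

variable {R ι : Type*} [CommRing R] [Fintype R] [DecidableEq R] [Fintype ι] [DecidableEq ι]
  {ψ : AddChar R ℂ}

lemma sum_apply_dotProduct (hψ : ψ.IsPrimitive) (z : ι → R) :
    ∑ ξ : ι → R, ψ (ξ ⬝ᵥ z) = if z = 0 then (Fintype.card R : ℂ) ^ Fintype.card ι else 0 := by
  have hsplit : ∑ ξ : ι → R, ψ (ξ ⬝ᵥ z) = ∏ i, ∑ t : R, ψ (t * z i) := by
    simp only [dotProduct, map_sum_eq_prod_s14, Fintype.prod_sum]
  simp only [hsplit, sum_mulShift _ hψ, Nat.cast_ite, Nat.cast_zero]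
  split_ifs with hz
  · simp [hz]
  · obtain ⟨i, hi⟩ := Function.ne_iff.mp hz
    exact prod_eq_zero (mem_univ i) (if_neg hi)

end AddChar

section PiFourier

variable {R ι : Type*} [CommRing R] [Fintype R] [DecidableEq R] [Fintype ι] [DecidableEq ι]
  {ψ : AddChar R ℂ}

noncomputable def piFourier (ψ : AddChar R ℂ) (f : (ι → R) → ℂ) (ξ : ι → R) : ℂ :=
  ((Fintype.card R : ℂ) ^ Fintype.card ι)⁻¹ * ∑ x, f x * ψ (-(ξ ⬝ᵥ x))

lemma sum_piFourier_mul (hψ : ψ.IsPrimitive) (f : (ι → R) → ℂ) (y : ι → R) :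
    ∑ ξ, piFourier ψ f ξ * ψ (ξ ⬝ᵥ y) = f y := by
  set C : ℂ := (Fintype.card R : ℂ) ^ Fintype.card ι
  have hC : C ≠ 0 := pow_ne_zero _ (Nat.cast_ne_zero.mpr Fintype.card_ne_zero)
  calc ∑ ξ, piFourier ψ f ξ * ψ (ξ ⬝ᵥ y)
      = C⁻¹ * ∑ x, f x * ∑ ξ : ι → R, ψ (ξ ⬝ᵥ (y - x)) := by
        simp only [piFourier, mul_sum, sum_mul]
        rw [sum_comm]
        refine sum_congr rfl fun x _ => sum_congr rfl fun ξ _ => ?_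
        rw [dotProduct_sub, sub_eq_neg_add, AddChar.map_add_eq_mul]
        ring
    _ = C⁻¹ * ∑ x, f x * if y - x = 0 then C else 0 := by
        simp only [AddChar.sum_apply_dotProduct hψ, C]
    _ = f y := by
        simp only [sub_eq_zero, mul_ite, mul_zero, sum_ite_eq, mem_univ, if_true]
        field_simp

lemma fourier_comp_line_eq_sum_piFourier (hψ : ψ.IsPrimitive) (f : (ι → R) → ℂ) (b c : ι → R)
    (η : R) :
    (Fintype.card R : ℂ)⁻¹ * ∑ u : R, f (u • b + c) * ψ (-(η * u)) =
      ∑ ξ with ξ ⬝ᵥ b = η, piFourier ψ f ξ * ψ (ξ ⬝ᵥ c) := by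
  have hR : (Fintype.card R : ℂ) ≠ 0 := Nat.cast_ne_zero.mpr Fintype.card_ne_zero
  calc (Fintype.card R : ℂ)⁻¹ * ∑ u : R, f (u • b + c) * ψ (-(η * u))
      = (Fintype.card R : ℂ)⁻¹ * ∑ u : R, ∑ ξ,
          piFourier ψ f ξ * ψ (ξ ⬝ᵥ c) * ψ (u * (ξ ⬝ᵥ b - η)) := by
        congr 1
        refine sum_congr rfl fun u _ => ?_
        rw [← sum_piFourier_mul hψ f (u • b + c), sum_mul]
        refine sum_congr rfl fun ξ _ => ?_
        rw [dotProduct_add, dotProduct_smul, smul_eq_mul, mul_sub, sub_eq_add_neg,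
          AddChar.map_add_eq_mul, AddChar.map_add_eq_mul, mul_comm η u]
        ring
    _ = ∑ ξ, piFourier ψ f ξ * ψ (ξ ⬝ᵥ c) *
          ((Fintype.card R : ℂ)⁻¹ * ∑ u : R, ψ (u * (ξ ⬝ᵥ b - η))) := by
        simp only [mul_sum]
        rw [sum_comm]
        exact sum_congr rfl fun ξ _ => sum_congr rfl fun u _ => by ring
    _ = ∑ ξ with ξ ⬝ᵥ b = η, piFourier ψ f ξ * ψ (ξ ⬝ᵥ c) := by
        simp only [AddChar.sum_mulShift _ hψ, sub_eq_zero, sum_filter]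
        refine sum_congr rfl fun ξ _ => ?_
        split_ifs <;> simp [hR]

lemma sum_norm_fourier_comp_line_le (hψ : ψ.IsPrimitive) (f : (ι → R) → ℂ) (b c : ι → R) :
    ∑ η : R, ‖(Fintype.card R : ℂ)⁻¹ * ∑ u : R, f (u • b + c) * ψ (-(η * u))‖ ≤
      ∑ ξ, ‖piFourier ψ f ξ‖ :=
  calc ∑ η : R, ‖(Fintype.card R : ℂ)⁻¹ * ∑ u : R, f (u • b + c) * ψ (-(η * u))‖
      = ∑ η : R, ‖∑ ξ with ξ ⬝ᵥ b = η, piFourier ψ f ξ * ψ (ξ ⬝ᵥ c)‖ := by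
        simp only [fourier_comp_line_eq_sum_piFourier hψ]
    _ ≤ ∑ η : R, ∑ ξ with ξ ⬝ᵥ b = η, ‖piFourier ψ f ξ‖ := by
        refine sum_le_sum fun η _ => (norm_sum_le _ _).trans_eq ?_
        simp only [norm_mul, ψ.norm_apply, mul_one]
    _ = ∑ ξ, ‖piFourier ψ f ξ‖ := sum_fiberwise _ _ _

end PiFourier

namespace ZMod

variable {N : ℕ} [NeZero N]

lemma exp_neg_val_div_eq_stdAddChar (a : ZMod N) :
    Complex.exp (-(2 * Real.pi * Complex.I) * (a.val : ℂ) / N) = stdAddChar (-a) := by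
  rw [AddChar.map_neg_eq_inv, stdAddChar_apply, toCircle_apply, ← Complex.exp_neg]
  ring_nf

lemma ft1_eq (g : ZMod N → ℂ) (η : ZMod N) :
    ft1 g η = (Fintype.card (ZMod N) : ℂ)⁻¹ * ∑ u, g u * stdAddChar (-(η * u)) := by
  simp only [ft1, exp_neg_val_div_eq_stdAddChar, ZMod.card]

lemma ftd_eq_piFourier {d : ℕ} (f : (Fin d → ZMod N) → ℂ) :
    ftd f = piFourier stdAddChar f := by
  ext ξ
  simp only [ftd, piFourier, exp_neg_val_div_eq_stdAddChar, ZMod.card, Fintype.card_fin]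
  rfl

end ZMod

theorem stmt14_general (p : ℕ) [Fact p.Prime] (d : ℕ)
    (f : (Fin d → ZMod p) → ℂ) (b c : Fin d → ZMod p) :
    wiener1 (fun u : ZMod p => f (fun i => u * b i + c i)) ≤ wienerd f := by
  simp only [wiener1, wienerd, ZMod.ft1_eq, ZMod.ftd_eq_piFourier]
  exact sum_norm_fourier_comp_line_le (ZMod.isPrimitive_stdAddChar p) f b c

/-- Let `p` be a prime, `d ≥ 1`, `f : (ZMod p)^d → ℂ`, and
`l = {ub + c : u ∈ ZMod p}` a line (`b ≠ 0`). Then the restriction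
`f_l(u) = f(ub + c)` satisfies `‖f̂‖₁ ≥ ‖f̂_l‖₁`. -/
theorem stmt14 (p : ℕ) [Fact p.Prime] (d : ℕ) (hd : 1 ≤ d)
    (f : (Fin d → ZMod p) → ℂ) (b c : Fin d → ZMod p) (hb : b ≠ 0) :
    wiener1 (fun u : ZMod p => f (fun i => u * b i + c i)) ≤ wienerd f :=
  stmt14_general p d f b c
end

section
/- Let p be a prime, d ≥ 1, and A ⊆ (ℤ/pℤ)^d with |A| < (2p)^{1/2}. Then there exists an invertible linear map T : (ℤ/pℤ)^d → (ℤ/pℤ)^d such that the first coordinates of the elements T(a), a ∈ A, are pairwise distinct. -/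
/-! For `a ≠ b` in `A`, the linear forms `f` with `f a = f b` form a hyperplane of the dual
space, and these hyperplanes are indexed by unordered pairs, so there are `(|A| choose 2) < p`
of them. By B. H. Neumann's lemma a proper subspace of a `K`-vector space has index at least
`|K|`, so fewer than `|K|` of them cannot cover the dual: some `f` separates the points of `A`.
A nonzero linear form is the first coordinate of some invertible change of coordinates. -/

open Module

section

variable {K V : Type*} [Field K] [AddCommGroup V] [Module K V]

theorem Submodule.card_le_index_of_ne_top {P : Submodule K V} (hP : P ≠ ⊤)
    [P.toAddSubgroup.FiniteIndex] : Nat.card K ≤ P.toAddSubgroup.index := by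
  have : Finite (V ⧸ P) := AddSubgroup.finite_quotient_of_finiteIndex
  have : Nontrivial (V ⧸ P) := Submodule.Quotient.nontrivial_iff.mpr hP
  obtain ⟨q, hq⟩ := exists_ne (0 : V ⧸ P)
  show Nat.card K ≤ Nat.card (V ⧸ P)
  exact Nat.card_le_card_of_injective (fun c : K => c • q) (smul_left_injective K hq)

open scoped Pointwise in
theorem Subspace.biUnion_ne_univ_of_card_lt {s : Finset (Subspace K V)} (hs : ⊤ ∉ s)
    (hcard : s.card < Nat.card K) : ⋃ P ∈ s, (P : Set V) ≠ Set.univ := by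
  intro hcovers
  have hcovers' : ⋃ P ∈ s, (0 : V) +ᵥ (P.toAddSubgroup : Set V) = Set.univ := by
    simpa only [zero_vadd] using! hcovers
  obtain ⟨P, hPs, hfin, hindex⟩ := AddSubgroup.exists_index_le_card_of_leftCoset_cover hcovers'
  have := Submodule.card_le_index_of_ne_top (ne_of_mem_of_not_mem hPs hs)
  omega

theorem Module.exists_dual_injOn_of_choose_two_lt (A : Finset V)
    (hA : A.card.choose 2 < Nat.card K) : ∃ f : Dual K V, Set.InjOn f A := by
  classical
  let H : Sym2 V → Subspace K (Dual K V) := Sym2.lift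
    ⟨fun a b => LinearMap.ker (Dual.eval K V (a - b)), fun a b => by
      simp only [← neg_sub b a, map_neg, LinearMap.ker_neg]⟩
  have hH (a b : V) : H s(a, b) = LinearMap.ker (Dual.eval K V (a - b)) := rfl
  set s := (A.offDiag.image Sym2.mk.uncurry).image H
  have hs : ⊤ ∉ s := by
    simp only [s, Finset.mem_image, Finset.mem_offDiag, Prod.exists, Function.uncurry_apply_pair]
    rintro ⟨_, ⟨a, b, ⟨-, -, hab⟩, rfl⟩, htop⟩
    rw [hH, LinearMap.ker_eq_top] at htop
    exact hab (sub_eq_zero.mp ((forall_dual_apply_eq_zero_iff K _).mp (LinearMap.ext_iff.mp htop)))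
  have hcard : s.card < Nat.card K :=
    Finset.card_image_le.trans_lt (by rwa [Sym2.card_image_offDiag])
  obtain ⟨f, hf⟩ : ∃ f, f ∉ ⋃ P ∈ s, (P : Set (Dual K V)) := by
    simpa [Set.eq_univ_iff_forall] using Subspace.biUnion_ne_univ_of_card_lt hs hcard
  refine ⟨f, fun a ha b hb hfab => by_contra fun hab => hf ?_⟩
  refine Set.mem_biUnion (x := H s(a, b)) ?_ ?_
  · exact Finset.mem_image_of_mem H
      (Finset.mem_image_of_mem _ (Finset.mem_offDiag.mpr ⟨ha, hb, hab⟩))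
  · simp [hH, hfab]

theorem Module.Dual.exists_linearEquiv_apply_eq_of_ne_zero {ι : Type*} [Finite ι]
    {f : Dual K (ι → K)} (hf : f ≠ 0) (i : ι) :
    ∃ T : (ι → K) ≃ₗ[K] (ι → K), ∀ x, T x i = f x := by
  classical
  obtain ⟨j, hj⟩ : ∃ j, f (Pi.single j 1) ≠ 0 := by
    by_contra! h
    exact hf ((Pi.basisFun K ι).ext fun j => by simpa using h j)
  have hunit : IsUnit (1 + (f - LinearMap.proj j : Dual K (ι → K)) (Pi.single j 1)) := by
    simpa using hj
  -- `x ↦ x + (f x - x j) • eⱼ` puts `f x` into coordinate `j`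
  refine ⟨(LinearEquiv.dilatransvection hunit).trans
    (LinearEquiv.funCongrLeft K K (Equiv.swap i j)), fun x => ?_⟩
  simp [LinearEquiv.dilatransvection.apply]

end

/-- Let `p` be a prime, `d ≥ 1`, and `A ⊆ (ZMod p)^d` with
`|A| < √(2p)`. Then there exists an invertible linear map `T` of `(ZMod p)^d` such
that the first coordinates of the elements `T(a)`, `a ∈ A`, are pairwise distinct. -/
theorem stmt16 (p : ℕ) [Fact p.Prime] (d : ℕ) (hd : 1 ≤ d)
    (A : Set (Fin d → ZMod p)) (hA : (A.ncard : ℝ) < Real.sqrt (2 * p)) :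
    ∃ T : (Fin d → ZMod p) ≃ₗ[ZMod p] (Fin d → ZMod p),
      Set.InjOn (fun a => T a ⟨0, hd⟩) A := by
  have hsq : A.ncard ^ 2 < 2 * p := by
    exact_mod_cast (Real.lt_sqrt (Nat.cast_nonneg _)).mp hA
  have hchoose : A.toFinite.toFinset.card.choose 2 < Nat.card (ZMod p) := by
    rw [Nat.card_zmod, Nat.choose_two_right, ← Set.ncard_eq_toFinset_card,
      Nat.div_lt_iff_lt_mul two_pos]
    nlinarith [Nat.sub_le A.ncard 1]
  obtain ⟨f, hf⟩ := Module.exists_dual_injOn_of_choose_two_lt _ hchoose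
  rw [Set.Finite.coe_toFinset] at hf
  by_cases hf0 : f = 0
  · exact ⟨LinearEquiv.refl _ _, fun a ha b hb _ => hf ha hb (by simp [hf0])⟩
  obtain ⟨T, hT⟩ := Module.Dual.exists_linearEquiv_apply_eq_of_ne_zero hf0 ⟨0, hd⟩
  exact ⟨T, by simpa only [hT] using hf⟩
end
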